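/- Suppose h is hyperbolic with respect to e, q is hyperbolic with respect to e with Λ(h,e) ⊆ Λ(q,e), and q·h = det(∑xᵢAᵢ) with A₁,…,Aₙ real symmetric and A(e) ≻ 0. Then Λ(h,e) = Λ(h,e) ∩ Λ(q,e) = {v ∈ ℝⁿ : ∑vᵢAᵢ ⪰ 0}, so Λ(h,e) is a spectrahedral cone. -/

import Mathlib

open MvPolynomial Polynomial Matrix

noncomputable def univPoly {n : ℕ} (h : MvPolynomial (Fin n) ℝ) (e v : Fin n → ℝ) : Polynomial ℝ :=
  MvPolynomial.aeval (fun i => Polynomial.C (v i) + Polynomial.C (e i) * Polynomial.X) h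

def RealRooted (p : Polynomial ℝ) : Prop :=
  ∀ z : ℂ, (p.map (algebraMap ℝ ℂ)).IsRoot z → z.im = 0

def Hyperbolic {n : ℕ} (h : MvPolynomial (Fin n) ℝ) (e : Fin n → ℝ) : Prop :=
  MvPolynomial.eval e h ≠ 0 ∧ ∀ v : Fin n → ℝ, RealRooted (univPoly h e v)

def hypCone {n : ℕ} (h : MvPolynomial (Fin n) ℝ) (e : Fin n → ℝ) : Set (Fin n → ℝ) :=
  {v | ∀ t : ℝ, (univPoly h e v).IsRoot t → t ≤ 0}

noncomputable def matPoly {n m : ℕ} (A : Fin n → Matrix (Fin m) (Fin m) ℝ) :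
    Matrix (Fin m) (Fin m) (MvPolynomial (Fin n) ℝ) :=
  fun j k => ∑ i, MvPolynomial.C (A i j k) * MvPolynomial.X i

/-!
The hyperbolicity cone of a product is the intersection of the cones of the factors, so
`Λ(h, e) ⊆ Λ(q, e)` makes `Λ(h, e)` the hyperbolicity cone of `q * h = det A(x)`. Writing the
positive definite `A(e)` as `Bᵀ B` with `B` invertible, the roots of `t ↦ det (A(v) + t A(e))` are
the negatives of the eigenvalues of `B⁻ᵀ A(v) B⁻¹`; they are all nonpositive exactly when this
matrix, equivalently `A(v)`, is positive semidefinite.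
-/

namespace Matrix

variable {ι : Type*} [Fintype ι] [DecidableEq ι]

lemma IsHermitian.posSemidef_of_det_add_smul_one_eq_zero_imp_nonpos {M : Matrix ι ι ℝ}
    (hM : M.IsHermitian) (h : ∀ t : ℝ, (M + t • 1).det = 0 → t ≤ 0) : M.PosSemidef := by
  refine hM.posSemidef_iff_eigenvalues_nonneg.mpr fun i => neg_nonpos.mp (h _ ?_)
  have hnotUnit := spectrum.mem_iff.mp (hM.eigenvalues_mem_spectrum_real i)
  rw [isUnit_iff_isUnit_det, isUnit_iff_ne_zero, not_not, Algebra.algebraMap_eq_smul_one]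
    at hnotUnit
  rw [show M + (-hM.eigenvalues i) • 1 = -(hM.eigenvalues i • 1 - M) by module, det_neg,
    hnotUnit, mul_zero]

open scoped MatrixOrder in
lemma PosDef.posSemidef_iff_det_add_smul_eq_zero_imp_nonpos {V E : Matrix ι ι ℝ} (hE : E.PosDef)
    (hV : V.IsHermitian) : V.PosSemidef ↔ ∀ t : ℝ, (V + t • E).det = 0 → t ≤ 0 := by
  refine ⟨fun hVpsd t hdet => not_lt.mp fun ht =>
    (PosDef.posSemidef_add hVpsd (hE.smul ht)).det_pos.ne' hdet, fun h => ?_⟩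
  obtain ⟨B, hB, rfl⟩ := CStarAlgebra.isStrictlyPositive_iff_eq_star_mul_self.mp
    hE.isStrictlyPositive
  have hBdet : IsUnit B.det := (isUnit_iff_isUnit_det B).mp hB
  obtain ⟨M, hM, rfl⟩ : ∃ M : Matrix ι ι ℝ, M.IsHermitian ∧ V = star B * M * B :=
    ⟨star B⁻¹ * V * B⁻¹, isHermitian_conjTranspose_mul_mul B⁻¹ hV, by
      rw [← mul_assoc, ← mul_assoc, ← star_mul, nonsing_inv_mul _ hBdet, star_one, one_mul,
        mul_assoc, nonsing_inv_mul _ hBdet, mul_one]⟩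
  rw [IsUnit.posSemidef_star_left_conjugate_iff hB]
  refine hM.posSemidef_of_det_add_smul_one_eq_zero_imp_nonpos fun t hdet => h t ?_
  rw [show star B * M * B + t • (star B * B) = star B * (M + t • 1) * B by noncomm_ring,
    det_mul, det_mul, hdet, mul_zero, zero_mul]

end Matrix

section HyperbolicityCone

variable {n : ℕ}

lemma eval_univPoly (p : MvPolynomial (Fin n) ℝ) (e v : Fin n → ℝ) (t : ℝ) :
    (univPoly p e v).eval t = MvPolynomial.eval (v + t • e) p := by
  have hline :
      (fun i => Polynomial.aeval t (Polynomial.C (v i) + Polynomial.C (e i) * Polynomial.X)) =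
        v + t • e := by
    ext i
    simp [mul_comm t]
  rw [univPoly, ← Polynomial.coe_aeval_eq_eval, ← AlgHom.comp_apply, MvPolynomial.comp_aeval,
    hline]
  rfl

lemma mem_hypCone_iff {p : MvPolynomial (Fin n) ℝ} {e v : Fin n → ℝ} :
    v ∈ hypCone p e ↔ ∀ t : ℝ, MvPolynomial.eval (v + t • e) p = 0 → t ≤ 0 := by
  simp only [hypCone, Set.mem_ofPred_eq, Polynomial.IsRoot, eval_univPoly]

lemma hypCone_mul (p r : MvPolynomial (Fin n) ℝ) (e : Fin n → ℝ) :
    hypCone (p * r) e = hypCone p e ∩ hypCone r e := by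
  ext v
  simp only [Set.mem_inter_iff, mem_hypCone_iff, map_mul, mul_eq_zero, or_imp, forall_and]

variable {m : ℕ}

lemma eval_det_matPoly (A : Fin n → Matrix (Fin m) (Fin m) ℝ) (w : Fin n → ℝ) :
    MvPolynomial.eval w (matPoly A).det = (∑ i, w i • A i).det := by
  rw [RingHom.map_det]
  congr 1
  ext j k
  simp [matPoly, Matrix.sum_apply, mul_comm]

lemma hypCone_det_matPoly {A : Fin n → Matrix (Fin m) (Fin m) ℝ} (hA : ∀ i, (A i).IsSymm)
    {e : Fin n → ℝ} (he : (∑ i, e i • A i).PosDef) :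
    hypCone (matPoly A).det e = {v | (∑ i, v i • A i).PosSemidef} := by
  ext v
  have hV : (∑ i, v i • A i).IsHermitian :=
    (isSelfAdjoint_sum _ fun i _ =>
      (isHermitian_iff_isSymm.mpr (hA i)).smul (.all (v i))).isHermitian
  rw [Set.mem_ofPred_eq, he.posSemidef_iff_det_add_smul_eq_zero_imp_nonpos hV, mem_hypCone_iff]
  simp only [eval_det_matPoly, Pi.add_apply, Pi.smul_apply, smul_eq_mul, add_smul, mul_smul,
    Finset.sum_add_distrib, ← Finset.smul_sum]

end HyperbolicityCone

theorem stmt18_general {n m : ℕ} (h q : MvPolynomial (Fin n) ℝ) (e : Fin n → ℝ)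
    (hsub : hypCone h e ⊆ hypCone q e)
    (A : Fin n → Matrix (Fin m) (Fin m) ℝ) (hsymm : ∀ i, (A i).IsSymm)
    (hdet : (matPoly A).det = q * h)
    (hpd : (∑ i, e i • A i).PosDef) :
    hypCone h e = hypCone h e ∩ hypCone q e ∧
      hypCone h e = {v : Fin n → ℝ | (∑ i, v i • A i).PosSemidef} := by
  have hcone : hypCone h e = hypCone (q * h) e := by
    rw [hypCone_mul, Set.inter_eq_right.mpr hsub]
  exact ⟨(Set.inter_eq_left.mpr hsub).symm, hcone.trans (hdet ▸ hypCone_det_matPoly hsymm hpd)⟩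

theorem stmt18 {n m : ℕ} (h q : MvPolynomial (Fin n) ℝ) (e : Fin n → ℝ)
    {dq dh : ℕ} (hqhom : q.IsHomogeneous dq) (hhhom : h.IsHomogeneous dh)
    (hh : Hyperbolic h e) (hq : Hyperbolic q e)
    (hsub : hypCone h e ⊆ hypCone q e)
    (A : Fin n → Matrix (Fin m) (Fin m) ℝ) (hsymm : ∀ i, (A i).IsSymm)
    (hdet : (matPoly A).det = q * h)
    (hpd : (∑ i, e i • A i).PosDef) :
    hypCone h e = hypCone h e ∩ hypCone q e ∧
      hypCone h e = {v : Fin n → ℝ | (∑ i, v i • A i).PosSemidef} :=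
  stmt18_general h q e hsub A hsymm hdet hpd
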